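/- Let n ≥ 7 and let u: ℝⁿ \ {0} → (0,∞) be C² with lim inf_{x→0} u(x) > 0, and suppose φ = u^{1-p} satisfies Δφ ≥ (p/(p-1))|∇φ|²/φ + (p-1) on ℝⁿ \ {0} for some p > 1. Then for every r > 0, inf_{∂B_r} u ≤ ((p-1)/(2n))^{-1/(p-1)} r^{-2/(p-1)}. -/

import Mathlib

open Real

/-- The Laplacian of `f : ℝⁿ → ℝ` computed as the sum of second partial derivatives
in the coordinate directions. -/
noncomputable def lap {n : ℕ} (f : EuclideanSpace ℝ (Fin n) → ℝ)
    (x : EuclideanSpace ℝ (Fin n)) : ℝ :=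
  ∑ i : Fin n, fderiv ℝ (fun y => fderiv ℝ f y (EuclideanSpace.single i 1)) x
    (EuclideanSpace.single i 1)

open Filter Topology

section aux
variable {n : ℕ}
local notation "E" => EuclideanSpace ℝ (Fin n)

noncomputable def qf (x : E) : ℝ := ∑ i, x i ^ 2

noncomputable def Qd (x : E) : E →L[ℝ] ℝ :=
  ∑ i, (2 * x i) • (EuclideanSpace.proj i : E →L[ℝ] ℝ)

lemma qf_eq_norm (x : E) : qf x = ‖x‖ ^ 2 := by
  rw [EuclideanSpace.norm_eq, Real.sq_sqrt (by positivity)]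
  simp [qf, Real.norm_eq_abs, sq_abs]

lemma qf_pos {x : E} (hx : x ≠ 0) : 0 < qf x := by
  rw [qf_eq_norm]
  exact pow_pos (norm_pos_iff.mpr hx) 2

lemma hasFDerivAt_qf (x : E) : HasFDerivAt qf (Qd x) x := by
  have h : ∀ i : Fin n, HasFDerivAt (fun y : E => y i ^ 2)
      ((2 * x i) • (EuclideanSpace.proj i : E →L[ℝ] ℝ)) x := by
    intro i
    have h := (EuclideanSpace.proj i : E →L[ℝ] ℝ).hasFDerivAt (x := x)
    have h2 := h.mul h
    have : (EuclideanSpace.proj i : E →L[ℝ] ℝ) x • (EuclideanSpace.proj i : E →L[ℝ] ℝ)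
        + (EuclideanSpace.proj i : E →L[ℝ] ℝ) x • (EuclideanSpace.proj i : E →L[ℝ] ℝ)
        = (2 * x i) • (EuclideanSpace.proj i : E →L[ℝ] ℝ) := by
      rw [two_mul, add_smul]
      rfl
    rw [this] at h2
    simpa [pow_two, Pi.mul_def] using h2
  have := HasFDerivAt.fun_sum (fun i (_ : i ∈ Finset.univ) => h i)
  show HasFDerivAt (fun y : E => ∑ i, y i ^ 2) (Qd x) x
  simpa [qf, Qd] using this

lemma Qd_single (x : E) (j : Fin n) : Qd x (EuclideanSpace.single j 1) = 2 * x j := by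
  simp [Qd, ContinuousLinearMap.sum_apply, EuclideanSpace.single_apply]

lemma lap_sub_eq {φ : E → ℝ} {x : E} (hx : x ≠ 0)
    (hφ : ∀ᶠ y in nhds x, ContDiffAt ℝ 2 φ y) (a δ en : ℝ)
    (hen : 2 * (n : ℝ) + 4 * en - 4 = 0) :
    lap (fun y => φ y - a * qf y - δ * qf y ^ en) x = lap φ x - 2 * n * a := by
  have hq0 : 0 < qf x := qf_pos hx
  have hev : ∀ᶠ y in 𝓝 x, y ≠ 0 ∧ DifferentiableAt ℝ φ y := by
    have h1 : ∀ᶠ y in 𝓝 x, y ≠ 0 :=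
      eventually_of_mem (isOpen_compl_singleton.mem_nhds hx) (fun y hy => hy)
    have h2 : ∀ᶠ y in 𝓝 x, DifferentiableAt ℝ φ y :=
      hφ.mono (fun y hy => hy.differentiableAt two_ne_zero)
    exact h1.and h2
  have key : ∀ i : Fin n,
      (fun y => fderiv ℝ (fun z => φ z - a * qf z - δ * qf z ^ en) y (EuclideanSpace.single i 1))
        =ᶠ[𝓝 x]
      (fun y => fderiv ℝ φ y (EuclideanSpace.single i 1)
        - (a * 2) * y i - (δ * en) * (qf y ^ (en - 1) * (2 * y i))) := by
    intro i
    filter_upwards [hev] with y hy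
    obtain ⟨hy0, hyd⟩ := hy
    have hq : HasFDerivAt (fun z => a * qf z) (a • Qd y) y := (hasFDerivAt_qf y).const_mul a
    have hr : HasFDerivAt (fun z => qf z ^ en) ((en * qf y ^ (en - 1)) • Qd y) y :=
      (hasFDerivAt_qf y).rpow_const (Or.inl (qf_pos hy0).ne')
    have hψ' : HasFDerivAt (fun z => φ z - a * qf z - δ * qf z ^ en)
        (fderiv ℝ φ y - a • Qd y - δ • ((en * qf y ^ (en - 1)) • Qd y)) y :=
      (hyd.hasFDerivAt.sub hq).sub (hr.const_mul δ)
    rw [hψ'.fderiv]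
    simp only [ContinuousLinearMap.sub_apply, ContinuousLinearMap.smul_apply, Qd_single,
      smul_eq_mul]
    ring
  have hC2 : ContDiffAt ℝ 2 φ x := hφ.self_of_nhds
  have hd2 : DifferentiableAt ℝ (fderiv ℝ φ) x :=
    (hC2.fderiv_right (m := 1) one_add_one_eq_two.le).differentiableAt one_ne_zero
  have hsecond : ∀ i : Fin n,
      fderiv ℝ (fun y => fderiv ℝ (fun z => φ z - a * qf z - δ * qf z ^ en) y
          (EuclideanSpace.single i 1)) x (EuclideanSpace.single i 1)
      = fderiv ℝ (fun y => fderiv ℝ φ y (EuclideanSpace.single i 1)) x (EuclideanSpace.single i 1)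
        - 2 * a - (δ * en) * (2 * qf x ^ (en - 1) + 4 * (en - 1) * qf x ^ (en - 1 - 1) * x i ^ 2) := by
    intro i
    rw [Filter.EventuallyEq.fderiv_eq (key i)]
    have hFi : DifferentiableAt ℝ (fun y => fderiv ℝ φ y (EuclideanSpace.single i 1)) x :=
      hd2.clm_apply (differentiableAt_const _)
    have hB := hFi.hasFDerivAt
    have h2 : HasFDerivAt (fun y : E => (a * 2) * y i)
        ((a * 2) • (EuclideanSpace.proj i : E →L[ℝ] ℝ)) x :=
      ((EuclideanSpace.proj i : E →L[ℝ] ℝ).hasFDerivAt).const_mul (a * 2)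
    have h3 : HasFDerivAt (fun y => qf y ^ (en - 1)) (((en - 1) * qf x ^ (en - 1 - 1)) • Qd x) x :=
      (hasFDerivAt_qf x).rpow_const (Or.inl hq0.ne')
    have h4 : HasFDerivAt (fun y : E => 2 * y i) ((2:ℝ) • (EuclideanSpace.proj i : E →L[ℝ] ℝ)) x :=
      ((EuclideanSpace.proj i : E →L[ℝ] ℝ).hasFDerivAt).const_mul 2
    have h6 := (hB.fun_sub h2).fun_sub ((h3.fun_mul h4).const_mul (δ * en))
    rw [h6.fderiv]
    simp only [ContinuousLinearMap.sub_apply, ContinuousLinearMap.add_apply,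
      ContinuousLinearMap.smul_apply, smul_eq_mul, Qd_single]
    have hproj : (EuclideanSpace.proj i : E →L[ℝ] ℝ) (EuclideanSpace.single i 1) = 1 := by
      simp [EuclideanSpace.single_apply]
    rw [hproj]
    ring
  unfold lap
  rw [Finset.sum_congr rfl (fun i _ => hsecond i)]
  have h8 : qf x ^ (en - 1 - 1) * qf x = qf x ^ (en - 1) := by
    rw [← Real.rpow_add_one hq0.ne' (en - 1 - 1)]
    congr 1
    ring
  have h7 : (∑ i : Fin n, δ * en * (2 * qf x ^ (en - 1) + 4 * (en - 1) * qf x ^ (en - 1 - 1) * x i ^ 2))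
      = δ * en * (2 * n * qf x ^ (en - 1) + 4 * (en - 1) * (qf x ^ (en - 1 - 1) * qf x)) := by
    have e1 : ∀ i : Fin n, δ * en * (2 * qf x ^ (en - 1) + 4 * (en - 1) * qf x ^ (en - 1 - 1) * x i ^ 2)
        = δ * en * (2 * qf x ^ (en - 1)) + δ * en * (4 * (en - 1) * qf x ^ (en - 1 - 1)) * x i ^ 2 :=
      fun i => by ring
    have hqx : (∑ i, x i ^ 2) = qf x := rfl
    rw [Finset.sum_congr rfl fun i _ => e1 i, Finset.sum_add_distrib, Finset.sum_const,
      Finset.card_univ, Fintype.card_fin, nsmul_eq_mul, ← Finset.mul_sum, hqx]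
    ring
  rw [Finset.sum_sub_distrib, Finset.sum_sub_distrib, h7, h8, Finset.sum_const,
    Finset.card_univ, Fintype.card_fin, nsmul_eq_mul]
  linear_combination (-(δ * en * qf x ^ (en - 1))) * hen

lemma lap_nonpos_of_isLocalMax {ψ : E → ℝ} {x : E}
    (hψ : ∀ᶠ y in 𝓝 x, ContDiffAt ℝ 2 ψ y) (hmax : IsLocalMax ψ x) :
    lap ψ x ≤ 0 := by
  by_contra hlt
  push_neg at hlt
  obtain ⟨i, hi⟩ : ∃ i : Fin n, 0 < fderiv ℝ
      (fun y => fderiv ℝ ψ y (EuclideanSpace.single i 1)) x (EuclideanSpace.single i 1) := by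
    by_contra h
    push_neg at h
    have : lap ψ x ≤ 0 := Finset.sum_nonpos fun i _ => h i
    exact absurd this (not_le.2 hlt)
  set v : E := EuclideanSpace.single i 1 with hv
  set L : ℝ → E := fun t => x + t • v with hLdef
  have hL0 : L 0 = x := by simp [hLdef]
  have hLc : Continuous L := by fun_prop
  have hLt : ∀ t : ℝ, HasDerivAt L v t := by
    intro t
    simpa [hLdef] using ((hasDerivAt_id t).smul_const v).const_add x
  set g : ℝ → ℝ := fun t => ψ (L t) with hgdef
  set g' : ℝ → ℝ := fun t => fderiv ℝ ψ (L t) v with hg'def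
  -- derivative of g
  have hg : ∀ t : ℝ, ContDiffAt ℝ 2 ψ (L t) → HasDerivAt g (g' t) t := by
    intro t ht
    exact ((ht.differentiableAt two_ne_zero).hasFDerivAt).comp_hasDerivAt t (hLt t)
  -- derivative of g' at 0
  have hC2 : ContDiffAt ℝ 2 ψ x := hψ.self_of_nhds
  have hd2 : DifferentiableAt ℝ (fderiv ℝ ψ) x :=
    (hC2.fderiv_right (m := 1) one_add_one_eq_two.le).differentiableAt one_ne_zero
  have hF : DifferentiableAt ℝ (fun y => fderiv ℝ ψ y v) x :=
    hd2.clm_apply (differentiableAt_const _)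
  have hg'0 : HasDerivAt g' (fderiv ℝ (fun y => fderiv ℝ ψ y v) x v) 0 := by
    have hFL : HasFDerivAt (fun y => fderiv ℝ ψ y v)
        (fderiv ℝ (fun y => fderiv ℝ ψ y v) x) (L 0) := by
      rw [hL0]
      exact hF.hasFDerivAt
    exact hFL.comp_hasDerivAt 0 (hLt 0)
  have hA : 0 < fderiv ℝ (fun y => fderiv ℝ ψ y v) x v := hi
  have hzero : g' 0 = 0 := by
    simp only [hg'def, hL0, hmax.fderiv_eq_zero]
    simp
  -- slope positivity
  have hslope : ∀ᶠ t in 𝓝[≠] (0:ℝ), 0 < slope g' 0 t :=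
    (hasDerivAt_iff_tendsto_slope.mp hg'0).eventually (eventually_gt_nhds hA)
  have hslope' : ∀ᶠ t in 𝓝 (0:ℝ), t ≠ 0 → 0 < slope g' 0 t := by
    have h := eventually_nhdsWithin_iff.mp hslope
    exact h.mono fun t h ht => h (by simpa using ht)
  have hcomb : ∀ᶠ t in 𝓝 (0:ℝ), (ContDiffAt ℝ 2 ψ (L t) ∧ g t ≤ g 0) ∧
      (t ≠ 0 → 0 < slope g' 0 t) := by
    have h1 : ∀ᶠ t in 𝓝 (0:ℝ), ContDiffAt ℝ 2 ψ (L t) ∧ ψ (L t) ≤ ψ x := by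
      have := hψ.and hmax
      have h0 : Tendsto L (𝓝 0) (𝓝 x) := by
        rw [← hL0]
        exact hLc.continuousAt.tendsto
      exact h0.eventually this
    filter_upwards [h1, hslope'] with t h1t h2t
    refine ⟨⟨h1t.1, ?_⟩, h2t⟩
    simpa [hgdef, hL0] using h1t.2
  obtain ⟨b1, hb1, hball⟩ := Metric.eventually_nhds_iff.mp hcomb
  set b : ℝ := b1 / 2 with hbdef
  have hb : 0 < b := by positivity
  have hmem : ∀ t ∈ Set.Icc (0:ℝ) b, dist t (0:ℝ) < b1 := by
    intro t ht
    rw [Real.dist_eq, sub_zero, abs_of_nonneg ht.1]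
    calc t ≤ b := ht.2
    _ < b1 := by simp [hbdef]; linarith
  have hgc : ContinuousOn g (Set.Icc 0 b) := by
    intro t ht
    have := (hball (hmem t ht)).1.1
    exact ((hg t this).continuousAt).continuousWithinAt
  have hderivpos : ∀ t ∈ interior (Set.Icc (0:ℝ) b), 0 < deriv g t := by
    intro t ht
    rw [interior_Icc] at ht
    have htmem := hball (hmem t ⟨ht.1.le, ht.2.le⟩)
    have hgd := hg t htmem.1.1
    rw [hgd.deriv]
    have hs := htmem.2 ht.1.ne'
    rw [slope_def_field] at hs
    have : 0 < (g' t - g' 0) / (t - 0) := hs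
    rw [hzero, sub_zero, sub_zero] at this
    rcases div_pos_iff.mp this with ⟨h, _⟩ | ⟨_, h⟩
    · exact h
    · linarith [ht.1]
  have hmono := strictMonoOn_of_deriv_pos (convex_Icc 0 b) hgc hderivpos
  have : g 0 < g b := hmono (Set.left_mem_Icc.2 hb.le) (Set.right_mem_Icc.2 hb.le) hb
  have : g b ≤ g 0 := (hball (hmem b (Set.right_mem_Icc.2 hb.le))).1.2
  linarith

end aux

theorem stmt13 (n : ℕ) (hn : 7 ≤ n) (p : ℝ) (hp : 1 < p)
    (u : EuclideanSpace ℝ (Fin n) → ℝ)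
    (hreg : ContDiffOn ℝ 2 u ({0}ᶜ : Set (EuclideanSpace ℝ (Fin n))))
    (hpos : ∀ x : EuclideanSpace ℝ (Fin n), x ≠ 0 → 0 < u x)
    (hliminf : ∃ c > (0 : ℝ), ∀ᶠ x in nhdsWithin 0 ({0}ᶜ : Set (EuclideanSpace ℝ (Fin n))),
      c ≤ u x)
    (φ : EuclideanSpace ℝ (Fin n) → ℝ) (hφ : ∀ x, φ x = u x ^ (1 - p))
    (hineq : ∀ x : EuclideanSpace ℝ (Fin n), x ≠ 0 →
      p / (p - 1) * (‖gradient φ x‖ ^ 2 / φ x) + (p - 1) ≤ lap φ x) :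
    ∀ r > (0 : ℝ),
      sInf (u '' Metric.sphere (0 : EuclideanSpace ℝ (Fin n)) r) ≤
        ((p - 1) / (2 * n)) ^ (-(1 : ℝ) / (p - 1)) * r ^ (-(2 : ℝ) / (p - 1)) := by
  intro r hr
  have hφeq : φ = fun x => u x ^ (1 - p) := funext hφ
  have hn0 : 0 < (n : ℝ) := by
    have : 0 < n := by omega
    exact_mod_cast this
  have hp1 : 0 < p - 1 := by linarith
  set c : ℝ := (p - 1) / (2 * n) with hcdef
  have hc : 0 < c := by positivity
  set en : ℝ := (2 - (n : ℝ)) / 2 with hendef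
  have hen : 2 * (n : ℝ) + 4 * en - 4 = 0 := by rw [hendef]; ring
  have hen_neg : en < 0 := by
    rw [hendef]
    have h7 : (7 : ℝ) ≤ (n : ℝ) := by exact_mod_cast hn
    linarith
  have h2nc : 2 * (n : ℝ) * c = p - 1 := by
    rw [hcdef]
    field_simp
  clear_value c en
  -- basic facts about φ
  have hφC2 : ∀ y : EuclideanSpace ℝ (Fin n), y ≠ 0 → ContDiffAt ℝ 2 φ y := by
    intro y hy
    rw [hφeq]
    exact (hreg.contDiffAt (isOpen_compl_singleton.mem_nhds hy)).rpow_const_of_ne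
      (hpos y hy).ne'
  have hφpos : ∀ y : EuclideanSpace ℝ (Fin n), y ≠ 0 → 0 < φ y := by
    intro y hy
    rw [hφ y]
    exact Real.rpow_pos_of_pos (hpos y hy) _
  have hlapφ : ∀ y : EuclideanSpace ℝ (Fin n), y ≠ 0 → p - 1 ≤ lap φ y := by
    intro y hy
    have h := hineq y hy
    have h1 : 0 ≤ p / (p - 1) := div_nonneg (by linarith) hp1.le
    have h2 : 0 ≤ ‖gradient φ y‖ ^ 2 / φ y := div_nonneg (by positivity) (hφpos y hy).le
    have h3 := mul_nonneg h1 h2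
    linarith
  -- bound near zero
  obtain ⟨c₀, hc₀, hev⟩ := hliminf
  have hev' := eventually_nhdsWithin_iff.mp hev
  obtain ⟨t, ht, hKt⟩ := Metric.eventually_nhds_iff.mp hev'
  set K : ℝ := c₀ ^ (1 - p) with hKdef
  have hK : ∀ y : EuclideanSpace ℝ (Fin n), y ≠ 0 → ‖y‖ < t → φ y ≤ K := by
    intro y hy hyt
    have hcu : c₀ ≤ u y := hKt (by simpa [dist_zero_right] using hyt) (by simpa using hy)
    rw [hφ y, hKdef]
    exact Real.rpow_le_rpow_of_nonpos hc₀ hcu (by linarith)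
  clear_value K
  -- the sphere and the max of φ on it
  set S := Metric.sphere (0 : EuclideanSpace ℝ (Fin n)) r with hSdef
  have hS0 : ∀ y ∈ S, y ≠ 0 := by
    intro y hy
    have : ‖y‖ = r := by rwa [hSdef, mem_sphere_zero_iff_norm] at hy
    intro h0
    rw [h0] at this
    simp at this
    linarith
  have i0 : Fin n := ⟨0, by omega⟩
  have hSne : S.Nonempty := by
    refine ⟨EuclideanSpace.single i0 r, ?_⟩
    rw [hSdef, mem_sphere_zero_iff_norm, EuclideanSpace.norm_single]
    exact abs_of_pos hr
  have hφcontS : ContinuousOn φ S := fun y hy =>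
    ((hφC2 y (hS0 y hy)).continuousAt).continuousWithinAt
  obtain ⟨ys, hysS, hysmax⟩ := (isCompact_sphere (0 : EuclideanSpace ℝ (Fin n)) r).exists_isMaxOn
    hSne hφcontS
  -- KEY STEP : c * r ^ 2 ≤ φ ys
  have key : c * r ^ 2 ≤ φ ys := by
    refine le_of_forall_sub_le ?_
    intro η hη
    -- choose parameters
    set η₁ : ℝ := min (η / (3 * r ^ 2)) c with hη₁def
    have hη₁pos : 0 < η₁ := lt_min (by positivity) hc
    have hη₁c : η₁ ≤ c := min_le_right _ _
    have hη₁r : η₁ * r ^ 2 ≤ η / 3 := by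
      have h1 : η₁ ≤ η / (3 * r ^ 2) := min_le_left _ _
      have h2 : η₁ * r ^ 2 ≤ (η / (3 * r ^ 2)) * r ^ 2 :=
        mul_le_mul_of_nonneg_right h1 (by positivity)
      calc η₁ * r ^ 2 ≤ (η / (3 * r ^ 2)) * r ^ 2 := h2
        _ = η / 3 := by field_simp
    clear_value η₁
    set a : ℝ := c - η₁ with hadef
    have ha : 0 ≤ a := by rw [hadef]; linarith
    have hac : a ≤ c := by rw [hadef]; linarith
    have hlapa : 0 < (p - 1) - 2 * (n : ℝ) * a := by
      have hexp : 2 * (n : ℝ) * a = 2 * (n : ℝ) * c - 2 * (n : ℝ) * η₁ := by rw [hadef]; ring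
      have hpos2 : 0 < 2 * (n : ℝ) * η₁ := by positivity
      linarith [h2nc]
    clear_value a
    set s : ℝ := min (min (t / 2) (r / 2)) (Real.sqrt (η / (3 * c))) with hsdef
    have hs : 0 < s := by
      refine lt_min (lt_min (by linarith) (by linarith)) (Real.sqrt_pos.2 (by positivity))
    have hst : s < t := by
      have : s ≤ t / 2 := le_trans (min_le_left _ _) (min_le_left _ _)
      linarith
    have hsr : s < r := by
      have : s ≤ r / 2 := le_trans (min_le_left _ _) (min_le_right _ _)
      linarith
    have hs2 : c * s ^ 2 ≤ η / 3 := by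
      have h1 : s ≤ Real.sqrt (η / (3 * c)) := min_le_right _ _
      have h2 : s ^ 2 ≤ η / (3 * c) := by
        have := pow_le_pow_left₀ hs.le h1 2
        rwa [Real.sq_sqrt (by positivity)] at this
      calc c * s ^ 2 ≤ c * (η / (3 * c)) := mul_le_mul_of_nonneg_left h2 hc.le
        _ = η / 3 := by field_simp
    clear_value s
    set xs : EuclideanSpace ℝ (Fin n) := EuclideanSpace.single i0 s with hxsdef
    have hxsnorm : ‖xs‖ = s := by
      rw [hxsdef, EuclideanSpace.norm_single]
      exact abs_of_pos hs
    have hxs0 : xs ≠ 0 := by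
      intro h
      rw [h] at hxsnorm
      simp at hxsnorm
      linarith
    clear_value xs
    set δ : ℝ := (η / 3) / ((s ^ 2) ^ en) with hδdef
    have hs2en : (0:ℝ) < (s ^ 2) ^ en := Real.rpow_pos_of_pos (pow_pos hs 2) en
    have hδ : 0 < δ := by
      rw [hδdef]
      exact div_pos (by linarith) hs2en
    have hδs : δ * (s ^ 2) ^ en = η / 3 := by
      rw [hδdef]
      field_simp
    clear_value δ
    set ψ : EuclideanSpace ℝ (Fin n) → ℝ := fun z => φ z - a * qf z - δ * qf z ^ en with hψdef
    have hψapp : ∀ z, ψ z = φ z - a * qf z - δ * qf z ^ en := fun z => by rw [hψdef]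
    have hψC2 : ∀ y : EuclideanSpace ℝ (Fin n), y ≠ 0 → ContDiffAt ℝ 2 ψ y := by
      intro y hy
      have hqf : ContDiff ℝ 2 (qf (n := n)) :=
        ContDiff.sum fun i _ => by
          have h := ((EuclideanSpace.proj i : EuclideanSpace ℝ (Fin n) →L[ℝ] ℝ).contDiff (n := 2)).pow 2
          exact h
      rw [hψdef]
      exact ((hφC2 y hy).sub (contDiffAt_const.mul hqf.contDiffAt)).sub
        (contDiffAt_const.mul (hqf.contDiffAt.rpow_const_of_ne (qf_pos hy).ne'))
    have hψxs_lb : -(a * s ^ 2) - η / 3 ≤ ψ xs := by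
      have hφxs : 0 < φ xs := hφpos xs hxs0
      have hqfxs : qf xs = s ^ 2 := by rw [qf_eq_norm, hxsnorm]
      rw [hψapp xs, hqfxs, hδs]
      linarith
    -- choose ε
    have htends : Filter.Tendsto (fun ε : ℝ => ((ε : ℝ) ^ 2) ^ en) (nhdsWithin 0 (Set.Ioi 0))
        Filter.atTop := by
      have h1 : Filter.Tendsto (fun ε : ℝ => ε⁻¹) (nhdsWithin 0 (Set.Ioi 0)) Filter.atTop :=
        tendsto_inv_nhdsGT_zero
      have h2 : Filter.Tendsto (fun z : ℝ => z ^ (-(2 * en))) Filter.atTop Filter.atTop :=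
        tendsto_rpow_atTop (by linarith)
      refine (h2.comp h1).congr' ?_
      filter_upwards [self_mem_nhdsWithin] with ε hε
      have hε0 : (0:ℝ) < ε := hε
      show (ε⁻¹) ^ (-(2 * en)) = (ε ^ 2) ^ en
      rw [Real.inv_rpow hε0.le, ← Real.rpow_neg hε0.le, neg_neg]
      rw [← Real.rpow_natCast ε 2, ← Real.rpow_mul hε0.le]
      norm_num
    have hεev : ∀ᶠ ε in nhdsWithin (0:ℝ) (Set.Ioi 0),
        ((ε : ℝ) ^ 2) ^ en ≥ (K - ψ xs) / δ + 1 ∧ ε < s ∧ 0 < ε := by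
      refine (htends.eventually_ge_atTop _).and (Filter.Eventually.and ?_ self_mem_nhdsWithin)
      exact (eventually_lt_nhds hs).filter_mono nhdsWithin_le_nhds
    obtain ⟨ε, hεge, hεs, hε0⟩ := hεev.exists
    have hKε : K - δ * (ε ^ 2) ^ en < ψ xs := by
      have h1 : δ * ((K - ψ xs) / δ + 1) ≤ δ * ((ε ^ 2) ^ en) :=
        mul_le_mul_of_nonneg_left hεge hδ.le
      have h2 : δ * ((K - ψ xs) / δ + 1) = K - ψ xs + δ := by field_simp
      linarith [h1, h2 ▸ h1]
    clear_value ψ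
    -- the annulus
    set A := Metric.closedBall (0 : EuclideanSpace ℝ (Fin n)) r \
      Metric.ball (0 : EuclideanSpace ℝ (Fin n)) ε with hAdef
    have hAmem : ∀ y, y ∈ A ↔ ε ≤ ‖y‖ ∧ ‖y‖ ≤ r := by
      intro y
      rw [hAdef]
      simp only [Set.mem_diff, Metric.mem_closedBall, Metric.mem_ball, dist_zero_right, not_lt]
      tauto
    have hA0 : ∀ y ∈ A, y ≠ 0 := by
      intro y hy h0
      have := ((hAmem y).mp hy).1
      rw [h0] at this
      simp at this
      linarith
    have hAcomp : IsCompact A :=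
      (isCompact_closedBall (0 : EuclideanSpace ℝ (Fin n)) r).diff Metric.isOpen_ball
    clear_value A
    have hxsA : xs ∈ A := by
      rw [hAmem, hxsnorm]
      exact ⟨hεs.le, hsr.le⟩
    have hψcont : ContinuousOn ψ A := fun y hy =>
      ((hψC2 y (hA0 y hy)).continuousAt).continuousWithinAt
    obtain ⟨x₀, hx₀A, hx₀max⟩ := hAcomp.exists_isMaxOn ⟨xs, hxsA⟩ hψcont
    obtain ⟨hx₀l, hx₀u⟩ := (hAmem x₀).mp hx₀A
    have hx₀0 : x₀ ≠ 0 := hA0 x₀ hx₀A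
    have hqfx₀ : qf x₀ = ‖x₀‖ ^ 2 := qf_eq_norm x₀
    rcases eq_or_lt_of_le hx₀u with hcase_r | hlt2
    · -- max on the outer sphere : conclude
      have hx₀S : x₀ ∈ S := by rw [hSdef, mem_sphere_zero_iff_norm]; exact hcase_r
      have h1 : ψ xs ≤ ψ x₀ := hx₀max hxsA
      have h2 : ψ x₀ ≤ φ x₀ - a * r ^ 2 := by
        rw [hψapp x₀, hqfx₀, hcase_r]
        have h0 : 0 ≤ δ * (r ^ 2) ^ en :=
          mul_nonneg hδ.le (Real.rpow_pos_of_pos (by positivity) en).le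
        have h0' : 0 ≤ a * r ^ 2 - a * r ^ 2 := by linarith
        linarith
      have h3 : φ x₀ ≤ φ ys := hysmax hx₀S
      have h4 : a * s ^ 2 ≤ η / 3 :=
        le_trans (mul_le_mul_of_nonneg_right hac (sq_nonneg s)) hs2
      have h5 : c * r ^ 2 - η / 3 ≤ a * r ^ 2 := by
        have hexp : a * r ^ 2 = c * r ^ 2 - η₁ * r ^ 2 := by rw [hadef]; ring
        linarith [hη₁r]
      linarith [hψxs_lb]
    rcases eq_or_lt_of_le hx₀l with hcase_e | hlt1
    · -- max on the inner sphere : contradiction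
      exfalso
      have h1 : ψ xs ≤ ψ x₀ := hx₀max hxsA
      have h2 : ψ x₀ ≤ K - δ * (ε ^ 2) ^ en := by
        rw [hψapp x₀, hqfx₀, ← hcase_e]
        have hφK : φ x₀ ≤ K := hK x₀ hx₀0 (by rw [← hcase_e]; linarith)
        have h0 : 0 ≤ a * ε ^ 2 := mul_nonneg ha (sq_nonneg ε)
        linarith
      linarith
    · -- interior max : contradiction via the Laplacian
      exfalso
      have hO : IsOpen (Metric.ball (0 : EuclideanSpace ℝ (Fin n)) r \
          Metric.closedBall (0 : EuclideanSpace ℝ (Fin n)) ε) :=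
        Metric.isOpen_ball.sdiff Metric.isClosed_closedBall
      have hx₀O : x₀ ∈ Metric.ball (0 : EuclideanSpace ℝ (Fin n)) r \
          Metric.closedBall (0 : EuclideanSpace ℝ (Fin n)) ε := by
        simp only [Set.mem_diff, Metric.mem_ball, Metric.mem_closedBall, dist_zero_right, not_le]
        exact ⟨hlt2, hlt1⟩
      have hOsub : (Metric.ball (0 : EuclideanSpace ℝ (Fin n)) r \
          Metric.closedBall (0 : EuclideanSpace ℝ (Fin n)) ε) ⊆ A := by
        intro y hy
        simp only [Set.mem_diff, Metric.mem_ball, Metric.mem_closedBall, dist_zero_right,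
          not_le] at hy
        rw [hAmem]
        exact ⟨hy.2.le, hy.1.le⟩
      have hloc : IsLocalMax ψ x₀ :=
        hx₀max.isLocalMax (Filter.mem_of_superset (hO.mem_nhds hx₀O) hOsub)
      have hψev : ∀ᶠ y in nhds x₀, ContDiffAt ℝ 2 ψ y :=
        Filter.eventually_of_mem (isOpen_compl_singleton.mem_nhds hx₀0)
          (fun y hy => hψC2 y hy)
      have hlapneg : lap ψ x₀ ≤ 0 := lap_nonpos_of_isLocalMax hψev hloc
      have hφev : ∀ᶠ y in nhds x₀, ContDiffAt ℝ 2 φ y :=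
        Filter.eventually_of_mem (isOpen_compl_singleton.mem_nhds hx₀0)
          (fun y hy => hφC2 y hy)
      have hlapeq : lap ψ x₀ = lap φ x₀ - 2 * n * a := by
        rw [hψdef]
        exact lap_sub_eq hx₀0 hφev a δ en hen
      have := hlapφ x₀ hx₀0
      rw [hlapeq] at hlapneg
      linarith
  -- conclude from key
  have hB : 0 < u ys := hpos ys (hS0 ys hysS)
  set w : ℝ := -(1 : ℝ) / (p - 1) with hwdef
  have hw : w ≤ 0 := by
    rw [hwdef]
    exact div_nonpos_of_nonpos_of_nonneg (by norm_num) hp1.le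
  clear_value w
  have hcr : 0 < c * r ^ 2 := mul_pos hc (pow_pos hr 2)
  have hkey' : c * r ^ 2 ≤ u ys ^ (1 - p) := by rwa [hφ ys] at key
  have step1 : u ys ≤ (c * r ^ 2) ^ w := by
    have h := Real.rpow_le_rpow_of_nonpos hcr hkey' hw
    have h2 : (u ys ^ (1 - p)) ^ w = u ys := by
      rw [← Real.rpow_mul hB.le]
      rw [show (1 - p) * w = 1 by rw [hwdef]; field_simp; ring]
      exact Real.rpow_one _
    rwa [h2] at h
  have step2 : (c * r ^ 2) ^ w = c ^ w * r ^ (-(2:ℝ) / (p - 1)) := by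
    rw [Real.mul_rpow hc.le (by positivity)]
    congr 1
    rw [← Real.rpow_natCast r 2, ← Real.rpow_mul hr.le]
    congr 1
    rw [hwdef]
    push_cast
    ring
  have hInf : sInf (u '' S) ≤ u ys := by
    refine csInf_le ⟨0, ?_⟩ ⟨ys, hysS, rfl⟩
    rintro z ⟨y, hyS, rfl⟩
    exact (hpos y (hS0 y hyS)).le
  calc sInf (u '' S) ≤ u ys := hInf
    _ ≤ (c * r ^ 2) ^ w := step1
    _ = c ^ w * r ^ (-(2:ℝ) / (p - 1)) := step2
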